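/- arXiv:1805.06773 — 3 statements merged into one kernel-verified Lean document; each statement's English description precedes it below -/
import Mathlib

section
/- Let A be a finite set of points in R^m all componentwise above the reference point r, and λ a direction with strictly positive components. Then max_{a∈A} g^mtch(a|λ,r) equals the length of the segment from r along direction λ/‖λ‖₂ up to the point where the ray r + tλ leaves the dominated region D(A,r) = ∪_{a∈A}{b : r ≤ b ≤ a}, i.e., max_{a∈A} g^mtch(a|λ,r) = sup{t ≥ 0 : r + tλ ∈ D(A,r)} when ‖λ‖₂ = 1. -/
open Finset

/-- `g^mtch(a | λ, r)`: the largest `t` with `r + t • λ ≤ a`, when all `λ j > 0`. -/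
noncomputable def gmtch {ι : Type*} [Fintype ι] [Nonempty ι] (a lam r : ι → ℝ) : ℝ :=
  univ.inf' univ_nonempty fun j => (a j - r j) / lam j

section

variable {ι : Type*} [Fintype ι] [Nonempty ι] {a lam r : ι → ℝ}

lemma gmtch_nonneg (hlam : ∀ j, 0 < lam j) (hra : r ≤ a) : 0 ≤ gmtch a lam r :=
  le_inf' _ _ fun j _ => div_nonneg (sub_nonneg.2 (hra j)) (hlam j).le

lemma ray_mem_Icc_iff (hlam : ∀ j, 0 < lam j) {t : ℝ} (ht : 0 ≤ t) :
    (fun j => r j + t * lam j) ∈ Set.Icc r a ↔ t ≤ gmtch a lam r := by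
  have hlow : r ≤ fun j => r j + t * lam j := fun j =>
    le_add_of_nonneg_right (mul_nonneg ht (hlam j).le)
  simp only [Set.mem_Icc, hlow, true_and, gmtch, le_inf'_iff, mem_univ, forall_const,
    le_div_iff₀ (hlam _), Pi.le_def]
  exact forall_congr' fun j => by constructor <;> intro h <;> linarith

lemma setOf_ray_mem_dominated_eq_Icc {A : Finset (ι → ℝ)} (hA : A.Nonempty)
    (hlam : ∀ j, 0 < lam j) :
    {t : ℝ | 0 ≤ t ∧ (fun j => r j + t * lam j) ∈ ⋃ a ∈ A, Set.Icc r a}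
      = Set.Icc 0 (A.sup' hA fun a => gmtch a lam r) := by
  ext t
  simp only [Set.mem_ofPred_eq, Set.mem_iUnion, exists_prop, Set.mem_Icc, le_sup'_iff]
  exact and_congr_right fun ht => exists_congr fun a => and_congr_right fun _ =>
    ray_mem_Icc_iff hlam ht

end

theorem max_gmtch_eq_sSup_ray_general (m : ℕ) [NeZero m] (A : Finset (Fin m → ℝ)) (hA : A.Nonempty)
    (r lam : Fin m → ℝ) (hlam : ∀ j, 0 < lam j)
    (hdom : ∀ a ∈ A, ∀ j, r j ≤ a j) :
    A.sup' hA (fun a => Finset.univ.inf' Finset.univ_nonempty fun j => (a j - r j) / lam j)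
      = sSup {t : ℝ | 0 ≤ t ∧ (fun j => r j + t * lam j) ∈ ⋃ a ∈ A, Set.Icc r a} := by
  rw [setOf_ray_mem_dominated_eq_Icc hA hlam]
  obtain ⟨a, ha⟩ := hA
  exact (csSup_Icc ((gmtch_nonneg hlam (hdom a ha)).trans (le_sup' (gmtch · lam r) ha))).symm

/-- For a finite nonempty set `A` of points componentwise above `r` and a unit direction
`λ` with strictly positive components, `max_{a∈A} g^mtch(a|λ,r)` equals
`sup {t ≥ 0 : r + tλ ∈ D(A,r)}` where `D(A,r) = ⋃_{a∈A} [r,a]`. -/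
theorem max_gmtch_eq_sSup_ray (m : ℕ) [NeZero m] (A : Finset (Fin m → ℝ)) (hA : A.Nonempty)
    (r lam : Fin m → ℝ) (hlam : ∀ j, 0 < lam j)
    (hnorm : Real.sqrt (∑ j, lam j ^ 2) = 1)
    (hdom : ∀ a ∈ A, ∀ j, r j ≤ a j) :
    A.sup' hA (fun a => Finset.univ.inf' Finset.univ_nonempty fun j => (a j - r j) / lam j)
      = sSup {t : ℝ | 0 ≤ t ∧ (fun j => r j + t * lam j) ∈ ⋃ a ∈ A, Set.Icc r a} :=
  max_gmtch_eq_sSup_ray_general m A hA r lam hlam hdom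
end

section
/- Line-segment length formula inside the contribution region: let A ⊆ R^m be finite, s ∈ A with s_j > r_j for all j, λ with strictly positive components and ‖λ‖₂ = 1. Define L(s,A,r,λ) = min{ min_{a∈A\{s}} max_j (s_j − a_j)/λ_j , min_j (s_j − r_j)/λ_j }. Then for 0 ≤ t < L(s,A,r,λ), the point s − tλ lies in the exclusive contribution region E(s) = {b : r ≤ b ≤ s} \ ∪_{a∈A\{s}}{b : b ≤ a}, and for t > L(s,A,r,λ), s − tλ ∉ E(s). Hence L(s,A,r,λ) = sup{t ≥ 0 : s − tλ ∈ E(s)} (assuming min_{a∈A\{s}} max_j (s_j−a_j)/λ_j > 0). -/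
open Finset

/-!
Along the ray `t ↦ s - t • λ` every coordinate condition defining `E(s)` becomes a bound on `t`,
because `λ > 0`: the ray stays above `r` exactly while `t ≤ g^mtch(r | λ, s)`, and it escapes the
region dominated by `a` exactly while `t < g*2tch(a | λ, s)`. Hence the set of admissible `t ≥ 0`
is the interval `[0, L)` or `[0, L]`, whose supremum is `L`.
-/

section Tchebycheff

variable {ι : Type*} [Fintype ι] [Nonempty ι]

/-- `g*2tch(a | λ, s)` in the paper's notation. -/
noncomputable def tchebycheffMax (lam s a : ι → ℝ) : ℝ :=
  univ.sup' univ_nonempty fun j => (s j - a j) / lam j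

/-- `g^mtch(r | λ, s)` in the paper's notation. -/
noncomputable def tchebycheffMin (lam s r : ι → ℝ) : ℝ :=
  univ.inf' univ_nonempty fun j => (s j - r j) / lam j

variable {lam : ι → ℝ} (hlam : ∀ j, 0 < lam j)
include hlam

theorem exists_lt_sub_mul_iff_lt_tchebycheffMax (s a : ι → ℝ) (t : ℝ) :
    (∃ j, a j < s j - t * lam j) ↔ t < tchebycheffMax lam s a := by
  simp only [tchebycheffMax, lt_sup'_iff, mem_univ, true_and]
  refine exists_congr fun j => ?_
  rw [lt_div_iff₀ (hlam j)]
  constructor <;> intro h <;> linarith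

theorem forall_le_sub_mul_iff_le_tchebycheffMin (s r : ι → ℝ) (t : ℝ) :
    (∀ j, r j ≤ s j - t * lam j) ↔ t ≤ tchebycheffMin lam s r := by
  simp only [tchebycheffMin, le_inf'_iff, mem_univ, true_implies]
  refine forall_congr' fun j => ?_
  rw [le_div_iff₀ (hlam j)]
  constructor <;> intro h <;> linarith

theorem tchebycheffMin_pos {s r : ι → ℝ} (hr : ∀ j, r j < s j) : 0 < tchebycheffMin lam s r :=
  (lt_inf'_iff _).2 fun j _ => div_pos (sub_pos.2 (hr j)) (hlam j)

omit [Fintype ι] in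
theorem forall_sub_mul_le_iff_nonneg (s : ι → ℝ) (t : ℝ) :
    (∀ j, s j - t * lam j ≤ s j) ↔ 0 ≤ t := by
  refine ⟨fun h => ?_, fun ht j => by nlinarith [hlam j]⟩
  obtain ⟨j⟩ := ‹Nonempty ι›
  nlinarith [h j, hlam j]

end Tchebycheff

def exclusiveRegion {ι : Type*} [DecidableEq (ι → ℝ)] (A : Finset (ι → ℝ)) (r s : ι → ℝ) :
    Set (ι → ℝ) :=
  {b | (∀ j, r j ≤ b j ∧ b j ≤ s j) ∧ ∀ a ∈ A.erase s, ∃ j, a j < b j}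

theorem sub_mul_mem_exclusiveRegion_iff {ι : Type*} [Fintype ι] [Nonempty ι] [DecidableEq (ι → ℝ)]
    {A : Finset (ι → ℝ)} {r s lam : ι → ℝ} (hlam : ∀ j, 0 < lam j) (hAs : (A.erase s).Nonempty)
    (t : ℝ) :
    (fun j => s j - t * lam j) ∈ exclusiveRegion A r s ↔
      t ∈ Set.Ico 0 ((A.erase s).inf' hAs (tchebycheffMax lam s)) ∩
        Set.Iic (tchebycheffMin lam s r) := by
  simp only [exclusiveRegion, Set.mem_ofPred_eq, forall_and,
    forall_le_sub_mul_iff_le_tchebycheffMin hlam, forall_sub_mul_le_iff_nonneg hlam,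
    exists_lt_sub_mul_iff_lt_tchebycheffMax hlam, lt_inf'_iff, Set.mem_inter_iff, Set.mem_Ico,
    Set.mem_Iic]
  tauto

theorem csSup_Ico_inter_Iic {α : Type*} [ConditionallyCompleteLinearOrder α] [DenselyOrdered α]
    {lo a b : α} (ha : lo < a) (hb : lo ≤ b) : sSup (Set.Ico lo a ∩ Set.Iic b) = min a b := by
  rcases le_or_gt a b with hab | hba
  · have hsub : Set.Ico lo a ⊆ Set.Iic b := fun x hx => hx.2.le.trans hab
    rw [Set.inter_eq_left.2 hsub, csSup_Ico ha, min_eq_left hab]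
  · have hIcc : Set.Ico lo a ∩ Set.Iic b = Set.Icc lo b :=
      Set.ext fun _ => ⟨fun ⟨⟨hlo, _⟩, hxb⟩ => ⟨hlo, hxb⟩,
        fun ⟨hlo, hxb⟩ => ⟨⟨hlo, hxb.trans_lt hba⟩, hxb⟩⟩
    rw [hIcc, csSup_Icc hb, min_eq_right hba.le]

theorem segment_length_formula_general (m : ℕ) [NeZero m] (A : Finset (Fin m → ℝ))
    (s : Fin m → ℝ) (hAs : (A.erase s).Nonempty)
    (r : Fin m → ℝ) (hr : ∀ j, r j < s j)
    (lam : Fin m → ℝ) (hlam : ∀ j, 0 < lam j)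
    (E : Set (Fin m → ℝ))
    (hE : E = {b | (∀ j, r j ≤ b j ∧ b j ≤ s j) ∧ ∀ a ∈ A.erase s, ∃ j, a j < b j})
    (L : ℝ)
    (hL : L = min
        ((A.erase s).inf' hAs fun a =>
          Finset.univ.sup' Finset.univ_nonempty fun j => (s j - a j) / lam j)
        (Finset.univ.inf' Finset.univ_nonempty fun j => (s j - r j) / lam j))
    (hpos : 0 < (A.erase s).inf' hAs fun a =>
        Finset.univ.sup' Finset.univ_nonempty fun j => (s j - a j) / lam j) :
    (∀ t : ℝ, 0 ≤ t → t < L → (fun j => s j - t * lam j) ∈ E) ∧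
    (∀ t : ℝ, L < t → (fun j => s j - t * lam j) ∉ E) ∧
    L = sSup {t : ℝ | 0 ≤ t ∧ (fun j => s j - t * lam j) ∈ E} := by
  change E = exclusiveRegion A r s at hE
  change L = min ((A.erase s).inf' hAs (tchebycheffMax lam s)) (tchebycheffMin lam s r) at hL
  change 0 < (A.erase s).inf' hAs (tchebycheffMax lam s) at hpos
  have hmem := sub_mul_mem_exclusiveRegion_iff (r := r) hlam hAs
  subst hE hL
  refine ⟨fun t ht htL => ?_, fun t htL hmemt => ?_, ?_⟩
  · obtain ⟨hta, htr⟩ := lt_min_iff.1 htL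
    exact (hmem t).2 ⟨⟨ht, hta⟩, htr.le⟩
  · obtain ⟨⟨-, hta⟩, htr⟩ := (hmem t).1 hmemt
    exact (le_min hta.le htr).not_gt htL
  · have hset : {t : ℝ | 0 ≤ t ∧ (fun j => s j - t * lam j) ∈ exclusiveRegion A r s} =
        Set.Ico 0 ((A.erase s).inf' hAs (tchebycheffMax lam s)) ∩
          Set.Iic (tchebycheffMin lam s r) :=
      Set.ext fun t => by
        rw [Set.mem_ofPred_eq, hmem t]
        exact and_iff_right_of_imp fun h => h.1.1
    rw [hset, csSup_Ico_inter_Iic hpos (tchebycheffMin_pos hlam hr).le]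

/-- Segment-length formula inside the exclusive contribution region: with
`L(s,A,r,λ) = min{min_{a∈A\{s}} max_j (s_j−a_j)/λ_j, min_j (s_j−r_j)/λ_j}`, the point
`s − tλ` lies in the exclusive region `E(s)` for `0 ≤ t < L` and outside it for `t > L`,
hence `L = sup {t ≥ 0 : s − tλ ∈ E(s)}`. -/
theorem segment_length_formula (m : ℕ) [NeZero m] (A : Finset (Fin m → ℝ))
    (s : Fin m → ℝ) (hs : s ∈ A) (hAs : (A.erase s).Nonempty)
    (r : Fin m → ℝ) (hr : ∀ j, r j < s j)
    (lam : Fin m → ℝ) (hlam : ∀ j, 0 < lam j)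
    (hnorm : Real.sqrt (∑ j, lam j ^ 2) = 1)
    (E : Set (Fin m → ℝ))
    (hE : E = {b | (∀ j, r j ≤ b j ∧ b j ≤ s j) ∧ ∀ a ∈ A.erase s, ∃ j, a j < b j})
    (L : ℝ)
    (hL : L = min
        ((A.erase s).inf' hAs fun a =>
          Finset.univ.sup' Finset.univ_nonempty fun j => (s j - a j) / lam j)
        (Finset.univ.inf' Finset.univ_nonempty fun j => (s j - r j) / lam j))
    (hpos : 0 < (A.erase s).inf' hAs fun a =>
        Finset.univ.sup' Finset.univ_nonempty fun j => (s j - a j) / lam j) :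
    (∀ t : ℝ, 0 ≤ t → t < L → (fun j => s j - t * lam j) ∈ E) ∧
    (∀ t : ℝ, L < t → (fun j => s j - t * lam j) ∉ E) ∧
    L = sSup {t : ℝ | 0 ≤ t ∧ (fun j => s j - t * lam j) ∈ E} :=
  segment_length_formula_general m A s hAs r hr lam hlam E hE L hL hpos
end

section
/- For a single point a ∈ R^m strictly dominating the reference point r, the hypervolume HV({a},r) equals the product ∏_{j=1}^m (a_j − r_j), and also HV({a},r) = ∫_{S_+} g^mtch(a|λ,r)^m / m dσ(λ) where σ is the surface measure on the nonnegative portion S_+ of the unit sphere. -/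
/-!
In polar coordinates `x = t • u` the volume of the box `[0, c]` is
`∫_{S} ∫_0^∞ t^(m-1) 1[t • u ∈ [0, c]] dt dσ(u)`. If all coordinates of `u` are positive, the ray
`t • u` stays in the box exactly for `t ≤ min_j c_j / u_j`, so the inner integral is
`(min_j c_j / u_j)^m / m`; if some coordinate is negative the ray misses the box, and the
directions with a vanishing coordinate form a `σ`-null set. Translating by `r` turns `[r, a]` into
`[0, a - r]`.
-/

open MeasureTheory Finset Set Metric

namespace MeasureTheory

theorem Measure.integral_volumeIoiPow {F : Type*} [NormedAddCommGroup F] [NormedSpace ℝ F]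
    (n : ℕ) (g : ℝ → F) :
    ∫ t, g t ∂Measure.volumeIoiPow n = ∫ t in Ioi (0 : ℝ), t ^ n • g t := by
  simp only [Measure.volumeIoiPow, ENNReal.ofReal]
  rw [integral_withDensity_eq_integral_smul (measurable_subtype_coe.pow_const _).real_toNNReal,
    integral_subtype_comap measurableSet_Ioi fun t => Real.toNNReal (t ^ n) • g t]
  refine setIntegral_congr_fun measurableSet_Ioi fun t ht => ?_
  rw [NNReal.smul_def, Real.coe_toNNReal _ (pow_nonneg ht.out.le _)]

variable {E F : Type*} [NormedAddCommGroup E] [NormedSpace ℝ E] [FiniteDimensional ℝ E]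
  [MeasurableSpace E] [BorelSpace E] [NormedAddCommGroup F] [NormedSpace ℝ F]
  (μ : Measure E) [μ.IsAddHaarMeasure]

theorem Measure.toSphere_ofPred_eq_zero {ℓ : StrongDual ℝ E} (hℓ : ℓ ≠ 0) :
    μ.toSphere {u | ℓ u = 0} = 0 := by
  have hs : MeasurableSet {u : sphere (0 : E) 1 | ℓ u = 0} :=
    (isClosed_eq (ℓ.continuous.comp continuous_subtype_val) continuous_const).measurableSet
  rw [μ.toSphere_apply' hs]
  refine mul_eq_zero_of_right _
    (measure_mono_null ?_ (μ.addHaar_submodule (LinearMap.ker (ℓ : E →ₗ[ℝ] ℝ)) ?_))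
  · rintro _ ⟨t, -, _, ⟨u, hu, rfl⟩, rfl⟩
    simp_all
  · rw [Ne, LinearMap.ker_eq_top]
    exact_mod_cast hℓ

theorem integral_eq_integral_toSphere_setIntegral_Ioi [Nontrivial E] {f : E → F}
    (hf : Integrable f μ) :
    ∫ x, f x ∂μ = ∫ u : sphere (0 : E) 1, (∫ t in Ioi (0 : ℝ),
      t ^ (Module.finrank ℝ E - 1) • f (t • (u : E))) ∂μ.toSphere := by
  have hpolar := μ.measurePreserving_homeomorphUnitSphereProd
  set g : sphere (0 : E) 1 × Ioi (0 : ℝ) → F := fun p => f ((p.2 : ℝ) • (p.1 : E))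
  have hg : g ∘ homeomorphUnitSphereProd E = f ∘ (↑) := by
    ext x
    simp [g, smul_inv_smul₀ (norm_ne_zero_iff.2 x.2)]
  have hgint :
      Integrable g (μ.toSphere.prod (Measure.volumeIoiPow (Module.finrank ℝ E - 1))) := by
    rw [← hpolar.integrable_comp_emb (Homeomorph.measurableEmbedding _), hg,
      ← integrableOn_iff_comap_subtypeVal (measurableSet_singleton 0).compl]
    exact hf.integrableOn
  calc ∫ x, f x ∂μ = ∫ x : ({0}ᶜ : Set E), f x ∂μ.comap (↑) := by
        rw [integral_subtype_comap (measurableSet_singleton _).compl, restrict_compl_singleton]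
    _ = ∫ p, g p ∂μ.toSphere.prod (Measure.volumeIoiPow _) := by
        rw [← hpolar.integral_comp (Homeomorph.measurableEmbedding _)]
        exact congrArg (integral _) hg.symm
    _ = _ := by
        rw [integral_prod g hgint]
        exact integral_congr_ae <| .of_forall fun u =>
          Measure.integral_volumeIoiPow _ fun t => f (t • (u : E))

end MeasureTheory

theorem setIntegral_Ioi_indicator_Iic_pow {g : ℝ} (hg : 0 ≤ g) (n : ℕ) :
    ∫ t in Ioi (0 : ℝ), (Iic g).indicator (· ^ n) t = g ^ (n + 1) / (n + 1) := by
  rw [setIntegral_indicator measurableSet_Iic, Ioi_inter_Iic, ← intervalIntegral.integral_of_le hg,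
    integral_pow]
  simp

namespace EuclideanSpace

variable {ι : Type*}

def box (r a : EuclideanSpace ℝ ι) : Set (EuclideanSpace ℝ ι) :=
  {b | ∀ j, r j ≤ b j ∧ b j ≤ a j}

theorem setIntegral_Ioi_pow_smul_indicator_box_of_neg {c u : EuclideanSpace ℝ ι} {j : ι}
    (hj : u j < 0) (n : ℕ) :
    ∫ t in Ioi (0 : ℝ), t ^ n • (box 0 c).indicator (1 : EuclideanSpace ℝ ι → ℝ) (t • u) = 0 := by
  refine setIntegral_eq_zero_of_forall_eq_zero fun t ht => ?_
  rw [indicator_of_notMem fun h => (h j).1.not_gt (mul_neg_of_pos_of_neg ht hj), smul_zero]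

theorem isClosed_box (r a : EuclideanSpace ℝ ι) : IsClosed (box r a) := by
  simp only [box, ofPred_forall, ofPred_and]
  exact isClosed_iInter fun j => (isClosed_le continuous_const (by fun_prop)).inter
    (isClosed_le (by fun_prop) continuous_const)

variable [Fintype ι]

theorem volume_box (r a : EuclideanSpace ℝ ι) (h : ∀ j, r j ≤ a j) :
    volume (box r a) = ENNReal.ofReal (∏ j, (a j - r j)) := by
  have hbox : box r a =
      (MeasurableEquiv.toLp 2 (ι → ℝ)).symm ⁻¹' univ.pi fun j => Icc (r j) (a j) := by
    ext
    simp only [Set.mem_preimage, Set.mem_univ_pi, Set.mem_Icc]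
    rfl
  rw [hbox, (volume_preserving_symm_measurableEquiv_toLp ι).measure_preimage
      (MeasurableSet.univ_pi fun _ => measurableSet_Icc).nullMeasurableSet,
    volume_pi_pi, ENNReal.ofReal_prod_of_nonneg fun j _ => sub_nonneg.2 (h j)]
  simp only [Real.volume_Icc]

theorem toSphere_ofPred_apply_eq_zero (j : ι) :
    (volume : Measure (EuclideanSpace ℝ ι)).toSphere {u | (u : EuclideanSpace ℝ ι) j = 0} = 0 := by
  classical
  refine Measure.toSphere_ofPred_eq_zero _ (ℓ := proj j) fun h => ?_
  simpa using congrArg (· (single j 1)) h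

theorem smul_mem_box_zero_iff [Nonempty ι] {c u : EuclideanSpace ℝ ι} (hu : ∀ j, 0 < u j)
    {t : ℝ} (ht : 0 < t) :
    t • u ∈ box 0 c ↔ t ≤ univ.inf' univ_nonempty fun j => c j / u j := by
  simp only [box, Set.mem_ofPred_eq, PiLp.zero_apply, PiLp.smul_apply, smul_eq_mul, le_inf'_iff,
    Finset.mem_univ, forall_const, le_div_iff₀ (hu _)]
  exact ⟨fun h j => (h j).2, fun h j => ⟨mul_nonneg ht.le (hu j).le, h j⟩⟩

theorem setIntegral_Ioi_pow_smul_indicator_box_of_pos [Nonempty ι] {c u : EuclideanSpace ℝ ι}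
    (hc : ∀ j, 0 ≤ c j) (hu : ∀ j, 0 < u j) :
    ∫ t in Ioi (0 : ℝ), t ^ (Fintype.card ι - 1) • (box 0 c).indicator 1 (t • u) =
      (univ.inf' univ_nonempty fun j => c j / u j) ^ Fintype.card ι / Fintype.card ι := by
  set g := univ.inf' univ_nonempty fun j => c j / u j
  have hg : 0 ≤ g := (le_inf'_iff _ _).2 fun j _ => div_nonneg (hc j) (hu j).le
  have hcard : Fintype.card ι - 1 + 1 = Fintype.card ι := Nat.sub_add_cancel Fintype.card_pos
  rw [setIntegral_congr_fun measurableSet_Ioi (g := (Iic g).indicator (· ^ (Fintype.card ι - 1)))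
    fun t ht => ?_, setIntegral_Ioi_indicator_Iic_pow hg, hcard]
  · rw [Nat.cast_pred Fintype.card_pos, sub_add_cancel]
  · by_cases htg : t ≤ g
    · simp [indicator_of_mem ((smul_mem_box_zero_iff hu ht).2 htg), htg]
    · simp [indicator_of_notMem (mt (smul_mem_box_zero_iff hu ht).1 htg), htg]

theorem setIntegral_toSphere_inf_div_pow [Nonempty ι] (c : EuclideanSpace ℝ ι)
    (hc : ∀ j, 0 ≤ c j) :
    ∫ u in {u : sphere (0 : EuclideanSpace ℝ ι) 1 | ∀ j, 0 ≤ (u : EuclideanSpace ℝ ι) j},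
        (univ.inf' univ_nonempty fun j => c j / (u : EuclideanSpace ℝ ι) j) ^ Fintype.card ι /
          Fintype.card ι ∂(volume : Measure (EuclideanSpace ℝ ι)).toSphere = ∏ j, c j := by
  set B := box 0 c
  set S := {u : sphere (0 : EuclideanSpace ℝ ι) 1 | ∀ j, 0 ≤ (u : EuclideanSpace ℝ ι) j}
  have hB : IsClosed B := isClosed_box 0 c
  have hS : IsClosed S := by
    simp only [S, ofPred_forall]
    exact isClosed_iInter fun j => isClosed_le continuous_const (by fun_prop)
  have hvolB : volume B = ENNReal.ofReal (∏ j, c j) := by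
    simpa using volume_box 0 c (by simpa using hc)
  have hBint : Integrable (B.indicator (1 : EuclideanSpace ℝ ι → ℝ)) := by
    rw [integrable_indicator_iff hB.measurableSet]
    exact integrableOn_const (by simp [hvolB])
  have hcoord : ∀ᵐ u : sphere (0 : EuclideanSpace ℝ ι) 1
      ∂(volume : Measure (EuclideanSpace ℝ ι)).toSphere, ∀ j, (u : EuclideanSpace ℝ ι) j ≠ 0 :=
    ae_all_iff.2 fun j => by simpa [ae_iff] using toSphere_ofPred_apply_eq_zero j
  rw [← integral_indicator hS.measurableSet]
  calc _ = ∫ u : sphere (0 : EuclideanSpace ℝ ι) 1, (∫ t in Ioi (0 : ℝ),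
          t ^ (Fintype.card ι - 1) • B.indicator 1 (t • (u : EuclideanSpace ℝ ι)))
            ∂(volume : Measure (EuclideanSpace ℝ ι)).toSphere := by
        refine integral_congr_ae (hcoord.mono fun u hu => ?_)
        by_cases hpos : ∀ j, 0 ≤ (u : EuclideanSpace ℝ ι) j
        · rw [indicator_of_mem (show u ∈ S from hpos)]
          exact (setIntegral_Ioi_pow_smul_indicator_box_of_pos hc
            fun j => (hpos j).lt_of_ne (hu j).symm).symm
        · obtain ⟨j, hj⟩ := not_forall.1 hpos
          rw [indicator_of_notMem (show u ∉ S from hpos)]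
          exact (setIntegral_Ioi_pow_smul_indicator_box_of_neg (not_le.1 hj) _).symm
    _ = ∫ x, B.indicator 1 x := by
        rw [integral_eq_integral_toSphere_setIntegral_Ioi _ hBint, finrank_euclideanSpace]
    _ = ∏ j, c j := by
        rw [integral_indicator_one hB.measurableSet, measureReal_def, hvolB,
          ENNReal.toReal_ofReal (prod_nonneg fun j _ => hc j)]

end EuclideanSpace

/-- For a single point `a` strictly dominating `r`, the hypervolume `HV({a},r)` equals
`∏_j (a_j − r_j)`, and also equals the spherical integral
`∫_{S₊} g^mtch(a|λ,r)^m / m dσ(λ)` over the nonnegative part of the unit sphere. -/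
theorem single_point_hypervolume (m : ℕ) [NeZero m]
    (a r : EuclideanSpace ℝ (Fin m)) (hdom : ∀ j, r j < a j) :
    volume ({b : EuclideanSpace ℝ (Fin m) | ∀ j, r j ≤ b j ∧ b j ≤ a j}) = ENNReal.ofReal (∏ j, (a j - r j)) ∧
    (volume ({b : EuclideanSpace ℝ (Fin m) | ∀ j, r j ≤ b j ∧ b j ≤ a j})).toReal
      = ∫ lam in {x : Metric.sphere (0 : EuclideanSpace ℝ (Fin m)) 1 |
            ∀ j, 0 ≤ (x : EuclideanSpace ℝ (Fin m)) j},
          (Finset.univ.inf' Finset.univ_nonempty fun j =>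
            (a j - r j) / (lam : EuclideanSpace ℝ (Fin m)) j) ^ m / m
          ∂((volume : Measure (EuclideanSpace ℝ (Fin m))).toSphere) := by
  have hle : ∀ j, r j ≤ a j := fun j => (hdom j).le
  have hvol := EuclideanSpace.volume_box r a hle
  refine ⟨hvol, ?_⟩
  change (volume (EuclideanSpace.box r a)).toReal = _
  have hsphere := EuclideanSpace.setIntegral_toSphere_inf_div_pow (a - r) fun j => by
    simpa using hle j
  simp only [PiLp.sub_apply, Fintype.card_fin] at hsphere
  rw [hvol, ENNReal.toReal_ofReal (prod_nonneg fun j _ => sub_nonneg.2 (hle j)), hsphere]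
end
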